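/- Let K = {x ∈ ℝⁿ : gᵢ(x) ≤ 0 for all i ∈ [m], hⱼ(x) = 0 for all j ∈ [ℓ]}, where each gᵢ is a convex polynomial function and each hⱼ is an affine function. Let p, q : ℝⁿ → ℝ be polynomials with q(x) > 0 on K, and let f = p/q. Assume the Abadie constraint qualification holds at every point of K, and assume that for every index set α ⊆ [m], the Jacobian matrix DΨ_α(x, λ_α) has rank n + |α| + ℓ at every point (x, λ_α) ∈ ℝⁿ × ℝ^{|α|}. Then the set Stat(K, f) of stationary points of the fractional optimization problem 'minimize f(x) subject to x ∈ K' has finitely many points. -/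

import Mathlib

open Filter Topology

/-- The Bouligand–Severi tangent cone of `K` at `x`. -/
def bouligandTangentCone {n : ℕ} (K : Set (Fin n → ℝ)) (x : Fin n → ℝ) :
    Set (Fin n → ℝ) :=
  {v | ∃ (y : ℕ → Fin n → ℝ) (t : ℕ → ℝ), (∀ k, y k ∈ K) ∧ (∀ k, 0 < t k) ∧
    Tendsto y atTop (nhds x) ∧ Tendsto t atTop (nhds 0) ∧
    Tendsto (fun k => (t k)⁻¹ • (y k - x)) atTop (nhds v)}

/-- The gradient of `f : ℝⁿ → ℝ` at `x`: the vector of partial derivatives. -/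
noncomputable def grad {n : ℕ} (f : (Fin n → ℝ) → ℝ) (x : Fin n → ℝ) : Fin n → ℝ :=
  fun j => fderiv ℝ f x (Pi.single j 1)

/-- The Hessian matrix of `f : ℝⁿ → ℝ` at `x`. -/
noncomputable def hess {n : ℕ} (f : (Fin n → ℝ) → ℝ) (x : Fin n → ℝ) :
    Matrix (Fin n) (Fin n) ℝ :=
  Matrix.of fun a b => fderiv ℝ (fun y => grad f y a) x (Pi.single b 1)

/-- The Jacobian matrix of a map `F : ℝⁿ → ℝⁿ` at `x`. -/
noncomputable def jac {n : ℕ} (F : (Fin n → ℝ) → (Fin n → ℝ)) (x : Fin n → ℝ) :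
    Matrix (Fin n) (Fin n) ℝ :=
  Matrix.of fun a b => fderiv ℝ (fun y => F y a) x (Pi.single b 1)

/-- The linearization cone of the constraint system `(g, h)` at `x`. -/
def linCone {n m l : ℕ} (g : Fin m → (Fin n → ℝ) → ℝ)
    (h : Fin l → ((Fin n → ℝ) →ᵃ[ℝ] ℝ)) (x : Fin n → ℝ) : Set (Fin n → ℝ) :=
  {v | (∀ i, g i x = 0 → ∑ j, grad (g i) x j * v j ≤ 0) ∧
       ∀ j', ∑ j, grad (h j') x j * v j = 0}

/-- The polynomial map `q∇p - p∇q : ℝⁿ → ℝⁿ`. -/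
noncomputable def fracMap {n : ℕ} (p q : (Fin n → ℝ) → ℝ) :
    (Fin n → ℝ) → (Fin n → ℝ) :=
  fun x i => q x * grad p x i - p x * grad q x i

/-- The Jacobian `DΨ_α(x, λ_α)` of the KKT map `Ψ_α` of the fractional problem:
the square block matrix
`[[Q(x) + Σ_{i∈α} λᵢ ∇²gᵢ(x), ∇g_α(x), ∇h(x)], [∇g_α(x)ᵀ, 0, 0], [∇h(x)ᵀ, 0, 0]]`
of size `n + |α| + ℓ`, where `Q(x)` is the Jacobian of `q∇p - p∇q` at `x`. -/
noncomputable def DPsi {n m l : ℕ} (p q : (Fin n → ℝ) → ℝ)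
    (g : Fin m → (Fin n → ℝ) → ℝ) (h : Fin l → ((Fin n → ℝ) →ᵃ[ℝ] ℝ))
    (α : Finset (Fin m)) (x : Fin n → ℝ) (lam : {i // i ∈ α} → ℝ) :
    Matrix (Fin n ⊕ ({i // i ∈ α} ⊕ Fin l)) (Fin n ⊕ ({i // i ∈ α} ⊕ Fin l)) ℝ :=
  Matrix.of fun r c =>
    match r, c with
    | Sum.inl a, Sum.inl b =>
        jac (fracMap p q) x a b + ∑ i : {i // i ∈ α}, lam i * hess (g i) x a b
    | Sum.inl a, Sum.inr (Sum.inl i) => grad (g i) x a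
    | Sum.inl a, Sum.inr (Sum.inr j) => grad (h j) x a
    | Sum.inr (Sum.inl i), Sum.inl b => grad (g i) x b
    | Sum.inr (Sum.inr j), Sum.inl b => grad (h j) x b
    | Sum.inr _, Sum.inr _ => 0

/-!
At a stationary point `x`, the vector `F(x) = (q∇p - p∇q)(x)` pairs nonnegatively with the
tangent cone, which by the Abadie condition is the linearization cone. That cone contains the
subspace orthogonal to the gradients of the active constraints, so `F(x)` lies in their span:
`x` extends to a zero `z = (x, λ, μ)` of the square polynomial system `Ψ_α` of its active set `α`.
The Jacobian of `Ψ_α` is `DΨ_α`, which is invertible, so the first-order Taylor expansion gives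
`𝔪_z ⊆ (Ψ_α) + 𝔪_z²` for the maximal ideal `𝔪_z` of `z`. In the quotient by a minimal prime of
`(Ψ_α)` inside `𝔪_z`, the image of `𝔪_z` is then an idempotent ideal of a Noetherian domain,
hence zero, so `𝔪_z` is itself a minimal prime of `(Ψ_α)`. There are finitely many of those.
-/

open MvPolynomial Matrix

theorem Ideal.mem_minimalPrimes_of_le_sup_sq {R : Type*} [CommRing R] [IsNoetherianRing R]
    {I P : Ideal R} [P.IsPrime] (hIP : I ≤ P) (hP : P ≤ I ⊔ P ^ 2) : P ∈ I.minimalPrimes := by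
  obtain ⟨Q, hQ, hQP⟩ := Ideal.exists_minimalPrimes_le hIP
  have := hQ.1.1
  suffices P ≤ Q from le_antisymm this hQP ▸ hQ
  let π := Ideal.Quotient.mk Q
  have hker : RingHom.ker π ≤ P := by rwa [Ideal.mk_ker]
  have hidem : IsIdempotentElem (P.map π) := by
    have := Ideal.map_mono (f := π) (hP.trans (sup_le_sup_right hQ.1.2 _))
    rw [Ideal.map_sup, Ideal.map_pow, Ideal.map_quotient_self, bot_sup_eq, sq] at this
    exact le_antisymm Ideal.mul_le_right this
  have hne : P.map π ≠ ⊤ :=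
    (Ideal.map_isPrime_of_surjective Ideal.Quotient.mk_surjective hker).ne_top
  obtain h | h := (Ideal.isIdempotentElem_iff_eq_bot_or_top _ (IsNoetherian.noetherian _)).1 hidem
  · rwa [Ideal.map_eq_bot_iff_le_ker, Ideal.mk_ker] at h
  · exact absurd h hne

namespace MvPolynomial

variable {R : Type*} [CommRing R] {σ : Type*}

theorem ker_eval_injective : Function.Injective fun z : σ → R => RingHom.ker (eval z) := by
  intro z w h
  funext b
  have : X b - C (z b) ∈ RingHom.ker (eval w) := by
    rw [← show RingHom.ker (eval z) = RingHom.ker (eval w) from h]; simp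
  simpa [sub_eq_zero, eq_comm] using this

noncomputable def jacobianMatrix (P : σ → MvPolynomial σ R) (z : σ → R) : Matrix σ σ R :=
  Matrix.of fun a b => eval z (pderiv b (P a))

theorem pderiv_rename_eq_zero {τ : Type*} {f : σ → τ} {y : τ} (hy : ∀ s, f s ≠ y)
    (P : MvPolynomial σ R) : pderiv y (rename f P) = 0 := by
  induction P using MvPolynomial.induction_on with
  | C a => simp
  | add p q hp hq => simp [hp, hq]
  | mul_X p i hp => simp [hp, pderiv_X_of_ne (hy i)]

section KKT

variable {ι κ : Type*} [Fintype ι] [Fintype κ]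

/-- The KKT map `Ψ` of the paper, as polynomials in the variables `(x, λ, μ)`. -/
noncomputable def kktSystem (F : σ → MvPolynomial σ R) (G : ι → MvPolynomial σ R)
    (H : κ → MvPolynomial σ R) : σ ⊕ (ι ⊕ κ) → MvPolynomial (σ ⊕ (ι ⊕ κ)) R
  | .inl a => rename .inl (F a) + ∑ i, X (.inr (.inl i)) * rename .inl (pderiv a (G i)) +
      ∑ j, X (.inr (.inr j)) * rename .inl (pderiv a (H j))
  | .inr (.inl i) => rename .inl (G i)
  | .inr (.inr j) => rename .inl (H j)

theorem eval_kktSystem_eq_zero {F : σ → MvPolynomial σ R} {G : ι → MvPolynomial σ R}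
    {H : κ → MvPolynomial σ R} {x : σ → R} {lam : ι → R} {mu : κ → R}
    (hF : ∀ a, eval x (F a) + ∑ i, lam i * eval x (pderiv a (G i)) +
      ∑ j, mu j * eval x (pderiv a (H j)) = 0)
    (hG : ∀ i, eval x (G i) = 0) (hH : ∀ j, eval x (H j) = 0) (r : σ ⊕ (ι ⊕ κ)) :
    eval (Sum.elim x (Sum.elim lam mu)) (kktSystem F G H r) = 0 := by
  rcases r with a | i | j <;> simp [kktSystem, eval_rename, Function.comp_def, *]

end KKT

variable [Fintype σ]

theorem sub_sub_sum_pderiv_mem_sq (z : σ → R) (f : MvPolynomial σ R) :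
    f - C (eval z f) - ∑ b, C (eval z (pderiv b f)) * (X b - C (z b)) ∈
      Ideal.span (Set.range fun b => X b - C (z b)) ^ 2 := by
  classical
  set J := Ideal.span (Set.range fun b => (X b - C (z b) : MvPolynomial σ R))
  have hX : ∀ b, X b - C (z b) ∈ J := fun b => Ideal.subset_span ⟨b, rfl⟩
  let lin (f : MvPolynomial σ R) := ∑ b, C (eval z (pderiv b f)) * (X b - C (z b))
  have hlin : ∀ f, lin f ∈ J := fun f => Ideal.sum_mem _ fun b _ => Ideal.mul_mem_left _ _ (hX b)
  show f - C (eval z f) - lin f ∈ J ^ 2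
  induction f using MvPolynomial.induction_on with
  | C a => simp [lin]
  | add p q hp hq =>
    convert Ideal.add_mem _ hp hq using 1
    simp only [lin, map_add, add_mul, Finset.sum_add_distrib]
    ring
  | mul_X p i hp =>
    have hlin_mul : lin (p * X i) = C (z i) * lin p + C (eval z p) * (X i - C (z i)) := by
      simp only [lin, pderiv_mul, pderiv_X, map_add, _root_.map_mul, eval_X, add_mul,
        Finset.sum_add_distrib, Finset.mul_sum]
      congr 1
      · exact Finset.sum_congr rfl fun b _ => by ring
      · simp [Pi.single_apply]
    have key : p * X i - C (eval z (p * X i)) - lin (p * X i) =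
        C (z i) * (p - C (eval z p) - lin p) +
          (lin p + (p - C (eval z p) - lin p)) * (X i - C (z i)) := by
      rw [hlin_mul]
      simp only [eval_X, _root_.map_mul]
      ring
    rw [key]
    exact Ideal.add_mem _ (Ideal.mul_mem_left _ _ hp) (by
      rw [sq]
      exact Ideal.mul_mem_mul (Ideal.add_mem _ (hlin p) (Ideal.pow_le_self two_ne_zero hp)) (hX i))

theorem ker_eval_eq_span (z : σ → R) :
    RingHom.ker (eval z) = Ideal.span (Set.range fun b => X b - C (z b)) := by
  refine le_antisymm (fun f hf => ?_) (Ideal.span_le.2 ?_)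
  · have hf : eval z f = 0 := hf
    have := Ideal.add_mem _ (Ideal.pow_le_self two_ne_zero (sub_sub_sum_pderiv_mem_sq z f))
      (Ideal.sum_mem _ (t := Finset.univ) fun b _ => Ideal.mul_mem_left _
        (C (eval z (pderiv b f))) (Ideal.subset_span ⟨b, rfl⟩))
    simpa [hf] using this
  · rintro _ ⟨b, rfl⟩
    simp

section Field

variable {K : Type*} [Field K]

theorem X_sub_C_mem_span_sup_sq {P : σ → MvPolynomial σ K} {z : σ → K}
    (hz : ∀ a, eval z (P a) = 0) (hrank : (jacobianMatrix P z).rank = Fintype.card σ) (b : σ) :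
    X b - C (z b) ∈ Ideal.span (Set.range P) ⊔ RingHom.ker (eval z) ^ 2 := by
  classical
  set M := jacobianMatrix P z
  obtain ⟨k, hk⟩ : ∃ k, k ᵥ* M = Pi.single b 1 := by
    have htop : LinearMap.range Mᵀ.mulVecLin = ⊤ := Submodule.eq_top_of_finrank_eq <| by
      rw [← Matrix.rank, Matrix.rank_transpose, hrank, Module.finrank_fintype_fun_eq_card]
    obtain ⟨k, hk⟩ := htop ▸ Submodule.mem_top (x := Pi.single b 1)
    exact ⟨k, by simpa [Matrix.mulVecLin_apply, Matrix.mulVec_transpose] using hk⟩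
  set rem := fun a => P a - C (eval z (P a)) -
    ∑ b', C (eval z (pderiv b' (P a))) * (X b' - C (z b'))
  have hrem : ∀ a, rem a ∈ RingHom.ker (eval z) ^ 2 := fun a => by
    rw [ker_eval_eq_span]; exact sub_sub_sum_pderiv_mem_sq z (P a)
  -- the linear parts of the `P a` combine, with coefficients `k`, to `X b - z b`
  have hcomb : X b - C (z b) = ∑ a, C (k a) * P a - ∑ a, C (k a) * rem a := by
    calc X b - C (z b) = ∑ b', C ((k ᵥ* M) b') * (X b' - C (z b')) := by
          simp [hk, Pi.single_apply]
      _ = ∑ a, C (k a) * (P a - rem a) := by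
          simp only [rem, hz, map_zero, sub_zero, sub_sub_cancel, Matrix.vecMul, dotProduct,
            M, jacobianMatrix, Matrix.of_apply, map_sum, _root_.map_mul, Finset.sum_mul,
            Finset.mul_sum]
          rw [Finset.sum_comm]
          exact Finset.sum_congr rfl fun _ _ => Finset.sum_congr rfl fun _ _ => by ring
      _ = _ := by simp only [mul_sub, Finset.sum_sub_distrib]
  rw [hcomb]
  refine Ideal.sub_mem _ (Ideal.mem_sup_left ?_) (Ideal.mem_sup_right ?_)
  · exact Ideal.sum_mem _ fun a _ => Ideal.mul_mem_left _ _ (Ideal.subset_span ⟨a, rfl⟩)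
  · exact Ideal.sum_mem _ fun a _ => Ideal.mul_mem_left _ _ (hrem a)

theorem ker_eval_le_span_sup_sq {P : σ → MvPolynomial σ K} {z : σ → K}
    (hz : ∀ a, eval z (P a) = 0) (hrank : (jacobianMatrix P z).rank = Fintype.card σ) :
    RingHom.ker (eval z) ≤ Ideal.span (Set.range P) ⊔ RingHom.ker (eval z) ^ 2 := by
  conv_lhs => rw [ker_eval_eq_span]
  exact Ideal.span_le.2 fun _ ⟨b, hb⟩ => hb ▸ X_sub_C_mem_span_sup_sq hz hrank b

theorem finite_setOf_eval_eq_zero_of_rank_jacobianMatrix (P : σ → MvPolynomial σ K)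
    (hrank : ∀ z, (∀ a, eval z (P a) = 0) → (jacobianMatrix P z).rank = Fintype.card σ) :
    {z : σ → K | ∀ a, eval z (P a) = 0}.Finite := by
  refine Set.Finite.of_finite_image (f := fun z => RingHom.ker (eval z))
    ((Ideal.span (Set.range P)).finite_minimalPrimes_of_isNoetherianRing _ |>.subset ?_)
    ker_eval_injective.injOn
  rintro _ ⟨z, hz, rfl⟩
  have : (RingHom.ker (eval z)).IsPrime := RingHom.ker_isPrime _
  exact Ideal.mem_minimalPrimes_of_le_sup_sq
    (Ideal.span_le.2 fun _ ⟨a, ha⟩ => ha ▸ hz a) (ker_eval_le_span_sup_sq hz (hrank z hz))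

end Field

theorem hasFDerivAt_eval (P : MvPolynomial σ ℝ) (x : σ → ℝ) :
    HasFDerivAt (fun y => eval y P)
      (∑ j, eval x (pderiv j P) • ContinuousLinearMap.proj (R := ℝ) (φ := fun _ : σ => ℝ) j) x := by
  classical
  induction P using MvPolynomial.induction_on with
  | C a => simpa using hasFDerivAt_const a x
  | add p q hp hq =>
    refine ((hp.add hq).congr_of_eventuallyEq (.of_forall fun y => ?_)).congr_fderiv ?_
    · simp
    · ext v
      simp [add_mul, Finset.sum_add_distrib]
  | mul_X p i hp =>
    refine ((hp.mul (hasFDerivAt_apply i x)).congr_of_eventuallyEq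
      (.of_forall fun y => ?_)).congr_fderiv ?_
    · simp
    · ext v
      simp [pderiv_X, Pi.single_apply, apply_ite (eval x), add_mul, Finset.sum_add_distrib,
        Finset.mul_sum, mul_assoc]

end MvPolynomial

namespace AffineMap

variable {K : Type*} [CommRing K] {σ : Type*} [Fintype σ] [DecidableEq σ]

noncomputable def toMvPolynomial (h : (σ → K) →ᵃ[K] K) : MvPolynomial σ K :=
  ∑ a, C (h.linear (Pi.single a 1)) * X a + C (h 0)

theorem eval_toMvPolynomial (h : (σ → K) →ᵃ[K] K) (x : σ → K) :
    eval x h.toMvPolynomial = h x := by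
  conv_rhs => rw [h.decomp, Pi.add_apply, ← Finset.univ_sum_single x]
  simp only [toMvPolynomial, map_sum, map_add, eval_C, eval_X, _root_.map_mul]
  congr 1
  refine Finset.sum_congr rfl fun a _ => ?_
  rw [mul_comm, ← smul_eq_mul, ← map_smul, ← Pi.single_smul', smul_eq_mul, mul_one]

theorem pderiv_toMvPolynomial (h : (σ → K) →ᵃ[K] K) (a : σ) :
    pderiv a h.toMvPolynomial = C (h.linear (Pi.single a 1)) := by
  simp [toMvPolynomial, pderiv_X, Pi.single_apply]

end AffineMap

section PolynomialFunctions

variable {n m l : ℕ}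

theorem grad_eval (P : MvPolynomial (Fin n) ℝ) (x : Fin n → ℝ) (a : Fin n) :
    grad (fun y => eval y P) x a = eval x (pderiv a P) := by
  simp [grad, (hasFDerivAt_eval P x).fderiv, Pi.single_apply]

theorem grad_affineMap (h : (Fin n → ℝ) →ᵃ[ℝ] ℝ) (x : Fin n → ℝ) (a : Fin n) :
    grad h x a = h.linear (Pi.single a 1) := by
  have : ⇑h = fun y => eval y h.toMvPolynomial := funext fun y => (h.eval_toMvPolynomial y).symm
  rw [this, grad_eval, h.pderiv_toMvPolynomial, eval_C]

theorem jac_eval (F : Fin n → MvPolynomial (Fin n) ℝ) (x : Fin n → ℝ) (a b : Fin n) :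
    jac (fun y a => eval y (F a)) x a b = eval x (pderiv b (F a)) :=
  grad_eval (F a) x b

theorem hess_eval (P : MvPolynomial (Fin n) ℝ) (x : Fin n → ℝ) (a b : Fin n) :
    hess (fun y => eval y P) x a b = eval x (pderiv b (pderiv a P)) := by
  simp only [hess, Matrix.of_apply, grad_eval]
  exact grad_eval _ x b

theorem fracMap_eval (P Q : MvPolynomial (Fin n) ℝ) :
    fracMap (fun y => eval y P) (fun y => eval y Q) =
      fun x a => eval x (Q * pderiv a P - P * pderiv a Q) := by
  funext x a
  simp [fracMap, grad_eval]

theorem jac_fracMap_eval (P Q : MvPolynomial (Fin n) ℝ) (x : Fin n → ℝ) (a b : Fin n) :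
    jac (fracMap (fun y => eval y P) (fun y => eval y Q)) x a b =
      eval x (pderiv b (Q * pderiv a P - P * pderiv a Q)) := by
  rw [fracMap_eval, jac_eval]

theorem jacobianMatrix_kktSystem (P Q : MvPolynomial (Fin n) ℝ)
    (G : Fin m → MvPolynomial (Fin n) ℝ) (h : Fin l → (Fin n → ℝ) →ᵃ[ℝ] ℝ)
    (α : Finset (Fin m)) (w : Fin n ⊕ ({i // i ∈ α} ⊕ Fin l) → ℝ) :
    jacobianMatrix (kktSystem (fun a => Q * pderiv a P - P * pderiv a Q) (fun i : α => G i)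
        (fun j => (h j).toMvPolynomial)) w =
      DPsi (fun y => eval y P) (fun y => eval y Q) (fun i y => eval y (G i)) h α
        (w ∘ Sum.inl) (fun i => w (.inr (.inl i))) := by
  classical
  -- no `μ`-Hessian term appears in `DPsi` since the `hⱼ` are affine
  have hinl : ∀ (S : MvPolynomial (Fin n) ℝ) b,
      pderiv (.inl b : Fin n ⊕ ({i // i ∈ α} ⊕ Fin l)) (rename .inl S) =
        rename .inl (pderiv b S) := fun S b => pderiv_rename Sum.inl_injective b S
  have hinr : ∀ (S : MvPolynomial (Fin n) ℝ) c,
      pderiv (.inr c : Fin n ⊕ ({i // i ∈ α} ⊕ Fin l)) (rename .inl S) = 0 :=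
    fun S c => pderiv_rename_eq_zero (fun _ => Sum.inl_ne_inr) S
  ext (a | i | j) (b | i' | j') <;>
    simp [jacobianMatrix, kktSystem, DPsi, hinl, hinr, pderiv_X, Pi.single_apply, eval_rename,
      jac_fracMap_eval, hess_eval, grad_eval, grad_affineMap,
      AffineMap.pderiv_toMvPolynomial]

end PolynomialFunctions

theorem mem_span_range_of_dotProduct_eq_zero {K ι κ : Type*} [Field K] [Fintype κ]
    [DecidableEq κ] {u : ι → κ → K} {F : κ → K}
    (hF : ∀ v, (∀ s, u s ⬝ᵥ v = 0) → F ⬝ᵥ v = 0) : F ∈ Submodule.span K (Set.range u) := by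
  refine (Subspace.forall_mem_dualAnnihilator_apply_eq_zero_iff _ F).1 fun φ hφ => ?_
  obtain ⟨w, rfl⟩ := (dotProductEquiv K κ).surjective φ
  have hw : ∀ s, u s ⬝ᵥ w = 0 := fun s => by
    simpa [dotProduct_comm] using
      (Submodule.mem_dualAnnihilator _).1 hφ _ (Submodule.subset_span ⟨s, rfl⟩)
  simpa [dotProduct_comm] using hF w hw

section Stationarity

variable {n m l : ℕ}

theorem dotProduct_nonneg_of_mem_bouligandTangentCone {K : Set (Fin n → ℝ)} {x F : Fin n → ℝ}
    (hF : ∀ y ∈ K, 0 ≤ F ⬝ᵥ (y - x)) {v : Fin n → ℝ} (hv : v ∈ bouligandTangentCone K x) :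
    0 ≤ F ⬝ᵥ v := by
  obtain ⟨y, t, hyK, ht, -, -, hlim⟩ := hv
  refine ge_of_tendsto (((continuous_const.dotProduct continuous_id).tendsto v).comp hlim)
    (.of_forall fun k => ?_)
  simpa [dotProduct_smul] using mul_nonneg (inv_nonneg.2 (ht k).le) (hF _ (hyK k))

theorem exists_multipliers_of_abadie {g : Fin m → (Fin n → ℝ) → ℝ}
    {h : Fin l → (Fin n → ℝ) →ᵃ[ℝ] ℝ} {K : Set (Fin n → ℝ)} {x F : Fin n → ℝ}
    (hF : ∀ y ∈ K, 0 ≤ F ⬝ᵥ (y - x)) (hACQ : bouligandTangentCone K x = linCone g h x)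
    {α : Finset (Fin m)} (hα : ∀ i, g i x = 0 → i ∈ α) :
    ∃ (lam : α → ℝ) (mu : Fin l → ℝ),
      F + ∑ i, lam i • grad (g i) x + ∑ j, mu j • grad (h j) x = 0 := by
  let u := Sum.elim (fun i : α => grad (g i) x) (fun j => grad (h j) x)
  have htangent : ∀ v, (∀ s, u s ⬝ᵥ v = 0) → v ∈ bouligandTangentCone K x := fun v hv => by
    rw [hACQ]
    exact ⟨fun i hi => (hv (.inl ⟨i, hα i hi⟩)).le, fun j => hv (.inr j)⟩
  -- `F` is nonnegative on the subspace orthogonal to the `u s`, hence vanishes there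
  have hspan : F ∈ Submodule.span ℝ (Set.range u) := by
    refine mem_span_range_of_dotProduct_eq_zero fun v hv => le_antisymm ?_
      (dotProduct_nonneg_of_mem_bouligandTangentCone hF (htangent v hv))
    have := dotProduct_nonneg_of_mem_bouligandTangentCone hF
      (htangent (-v) fun s => by simp [hv s])
    simpa using this
  obtain ⟨c, hc⟩ := (Submodule.mem_span_range_iff_exists_fun ℝ).1 hspan
  refine ⟨fun i => -c (.inl i), fun j => -c (.inr j), ?_⟩
  simp [← hc, u, Fintype.sum_sum_type]

end Stationarity

theorem stationary_points_finite_of_full_rank_general {n m l : ℕ}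
    (g : Fin m → (Fin n → ℝ) → ℝ)
    (hgpoly : ∀ i, ∃ P : MvPolynomial (Fin n) ℝ, ∀ x, g i x = MvPolynomial.eval x P)
    (h : Fin l → ((Fin n → ℝ) →ᵃ[ℝ] ℝ))
    (p q : (Fin n → ℝ) → ℝ)
    (hp : ∃ P : MvPolynomial (Fin n) ℝ, ∀ x, p x = MvPolynomial.eval x P)
    (hq : ∃ P : MvPolynomial (Fin n) ℝ, ∀ x, q x = MvPolynomial.eval x P)
    (K : Set (Fin n → ℝ))
    (hK : K = {x | (∀ i, g i x ≤ 0) ∧ ∀ j, h j x = 0})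
    (ACQ : ∀ x ∈ K, bouligandTangentCone K x = linCone g h x)
    (hrank : ∀ (α : Finset (Fin m)) (x : Fin n → ℝ) (lam : {i // i ∈ α} → ℝ),
      (DPsi p q g h α x lam).rank = n + α.card + l) :
    Set.Finite {x ∈ K | ∀ y ∈ K, 0 ≤ ∑ i, fracMap p q x i * (y i - x i)} := by
  classical
  obtain ⟨P, hP⟩ := hp
  obtain ⟨Q, hQ⟩ := hq
  choose G hG using hgpoly
  obtain rfl : p = fun x => eval x P := funext hP
  obtain rfl : q = fun x => eval x Q := funext hQ
  obtain rfl : g = fun i x => eval x (G i) := funext fun i => funext (hG i)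
  let Ψ (α : Finset (Fin m)) := kktSystem (fun a => Q * pderiv a P - P * pderiv a Q)
    (fun i : α => G i) (fun j => (h j).toMvPolynomial)
  have hfinite : ∀ α, {w | ∀ r, eval w (Ψ α r) = 0}.Finite := fun α =>
    finite_setOf_eval_eq_zero_of_rank_jacobianMatrix _ fun w _ => by
      rw [jacobianMatrix_kktSystem, hrank]
      simp [add_assoc]
  refine (Set.finite_iUnion fun α => (hfinite α).image (· ∘ Sum.inl)).subset ?_
  rintro x ⟨hxK, hxVI⟩
  let α := Finset.univ.filter fun i => eval x (G i) = 0
  obtain ⟨lam, mu, hKKT⟩ := exists_multipliers_of_abadie hxVI (ACQ x hxK) (α := α) (by simp [α])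
  refine Set.mem_iUnion.2 ⟨α, Sum.elim x (Sum.elim lam mu), eval_kktSystem_eq_zero (fun a => ?_)
    (fun i => (Finset.mem_filter.1 i.2).2)
    (fun j => by simpa [AffineMap.eval_toMvPolynomial] using (hK ▸ hxK).2 j), rfl⟩
  simpa [fracMap_eval, grad_eval, grad_affineMap, AffineMap.pderiv_toMvPolynomial]
    using congrFun hKKT a

/-- For `K = {x : gᵢ(x) ≤ 0, hⱼ(x) = 0}` with `gᵢ` convex polynomial and
`hⱼ` affine, `p, q` polynomials with `q > 0` on `K` and `f = p/q`, the Abadie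
constraint qualification holding on `K`, and `DΨ_α` of full rank `n + |α| + ℓ`
everywhere for every `α ⊆ [m]`, the set of stationary points
`Stat(K, f) = Sol(K, q∇p - p∇q)` has finitely many points. -/
theorem stationary_points_finite_of_full_rank {n m l : ℕ}
    (g : Fin m → (Fin n → ℝ) → ℝ)
    (hgpoly : ∀ i, ∃ P : MvPolynomial (Fin n) ℝ, ∀ x, g i x = MvPolynomial.eval x P)
    (hgconv : ∀ i, ConvexOn ℝ Set.univ (g i))
    (h : Fin l → ((Fin n → ℝ) →ᵃ[ℝ] ℝ))
    (p q : (Fin n → ℝ) → ℝ)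
    (hp : ∃ P : MvPolynomial (Fin n) ℝ, ∀ x, p x = MvPolynomial.eval x P)
    (hq : ∃ P : MvPolynomial (Fin n) ℝ, ∀ x, q x = MvPolynomial.eval x P)
    (K : Set (Fin n → ℝ))
    (hK : K = {x | (∀ i, g i x ≤ 0) ∧ ∀ j, h j x = 0})
    (hqpos : ∀ x ∈ K, 0 < q x)
    (ACQ : ∀ x ∈ K, bouligandTangentCone K x = linCone g h x)
    (hrank : ∀ (α : Finset (Fin m)) (x : Fin n → ℝ) (lam : {i // i ∈ α} → ℝ),
      (DPsi p q g h α x lam).rank = n + α.card + l) :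
    Set.Finite {x ∈ K | ∀ y ∈ K, 0 ≤ ∑ i, fracMap p q x i * (y i - x i)} :=
  stationary_points_finite_of_full_rank_general g hgpoly h p q hp hq K hK ACQ hrank
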